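/- arXiv:2404.15145 — 3 statements merged into one kernel-verified Lean document; each statement's English description precedes it below -/
import Mathlib

section
/- Let H be a finite group and Y = HD a product of subgroups where D = ⟨a⟩ ⋊ ⟨b⟩ is a dihedral group with cyclic part ⟨a⟩ and b an involution inverting a. If H has trivial core in Y, then H ∩ ⟨a⟩ = 1; consequently H ∩ D is either trivial or generated by a single element of D outside ⟨a⟩. -/
/-- If `Y = HD` with `D = ⟨a⟩ ⋊ ⟨b⟩` dihedral and `H` core-free in `Y`, then
`H ∩ ⟨a⟩ = 1`; consequently `H ∩ D` is trivial or generated by an element of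
`D` outside `⟨a⟩`. -/
theorem stmt_1 {Y : Type*} [Group Y] [Finite Y] (H D : Subgroup Y) (a b : Y)
    (hb : b ^ 2 = 1) (hbab : b * a * b⁻¹ = a⁻¹)
    (hD : D = Subgroup.closure {a, b})
    (hfac : ∀ y : Y, ∃ h ∈ H, ∃ d ∈ D, y = h * d)
    (hcore : H.normalCore = ⊥) :
    H ⊓ Subgroup.zpowers a = ⊥ ∧
      (H ⊓ D = ⊥ ∨ ∃ b₁ ∈ D, b₁ ∉ Subgroup.zpowers a ∧
        H ⊓ D = Subgroup.zpowers b₁) := by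
  have hb' : b⁻¹ = b := by
    rw [← mul_one b⁻¹, ← hb]; group
  -- every element of D conjugates a to a or a⁻¹
  have hconj : ∀ d ∈ D, d * a * d⁻¹ = a ∨ d * a * d⁻¹ = a⁻¹ := by
    rw [hD]
    intro d hd
    induction hd using Subgroup.closure_induction with
    | mem x hx =>
      rcases hx with rfl | rfl
      · left; group
      · right; rw [hbab]
    | one => left; group
    | mul x y hx hy ihx ihy =>
      rcases ihy with h2 | h2
      · have : y * a * y⁻¹ = a := h2
        rcases ihx with h1 | h1
        · left; calc x * y * a * (x * y)⁻¹ = x * (y * a * y⁻¹) * x⁻¹ := by group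
            _ = x * a * x⁻¹ := by rw [this]
            _ = a := h1
        · right; calc x * y * a * (x * y)⁻¹ = x * (y * a * y⁻¹) * x⁻¹ := by group
            _ = x * a * x⁻¹ := by rw [this]
            _ = a⁻¹ := h1
      · rcases ihx with h1 | h1
        · right; calc x * y * a * (x * y)⁻¹ = x * (y * a * y⁻¹) * x⁻¹ := by group
            _ = x * a⁻¹ * x⁻¹ := by rw [h2]
            _ = (x * a * x⁻¹)⁻¹ := by group
            _ = a⁻¹ := by rw [h1]
        · left; calc x * y * a * (x * y)⁻¹ = x * (y * a * y⁻¹) * x⁻¹ := by group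
            _ = x * a⁻¹ * x⁻¹ := by rw [h2]
            _ = (x * a * x⁻¹)⁻¹ := by group
            _ = a := by rw [h1, inv_inv]
    | inv x hx ihx =>
      rcases ihx with h1 | h1
      · left
        rw [inv_inv]
        have key : x⁻¹ * (x * a * x⁻¹) * x = a := by group
        rw [h1] at key; exact key
      · right
        rw [inv_inv]
        have key : x⁻¹ * (x * a * x⁻¹) * x = a := by group
        rw [h1] at key
        have key2 := congrArg (·⁻¹) key
        simpa [mul_assoc] using key2
  -- conjugation of powers of a by elements of D
  have hconjpow : ∀ d ∈ D, ∀ k : ℤ, d * a ^ k * d⁻¹ = a ^ k ∨ d * a ^ k * d⁻¹ = (a ^ k)⁻¹ := by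
    intro d hd k
    have key : d * a ^ k * d⁻¹ = (d * a * d⁻¹) ^ k := by
      rw [conj_zpow]
    rcases hconj d hd with h | h
    · left; rw [key, h]
    · right; rw [key, h, inv_zpow]
  -- Part 1 : H ⊓ zpowers a = ⊥
  have part1 : H ⊓ Subgroup.zpowers a = ⊥ := by
    rw [eq_bot_iff, ← hcore]
    intro x hx
    obtain ⟨hxH, k, hk⟩ := hx
    intro g
    obtain ⟨h, hh, d, hd, rfl⟩ := hfac g
    have hda : d * x * d⁻¹ ∈ H := by
      have hk' : a ^ k = x := hk
      rcases hconjpow d hd k with h1 | h1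
      · rw [hk'] at h1; rw [h1]; exact hxH
      · rw [hk'] at h1; rw [h1]; exact H.inv_mem hxH
    have heq : h * d * x * (h * d)⁻¹ = h * (d * x * d⁻¹) * h⁻¹ := by group
    rw [heq]
    exact H.mul_mem (H.mul_mem hh hda) (H.inv_mem hh)
  refine ⟨part1, ?_⟩
  -- every element of D is in ⟨a⟩ or of the form a^k * b
  have hform : ∀ d ∈ D, d ∈ Subgroup.zpowers a ∨ d * b ∈ Subgroup.zpowers a := by
    rw [hD]
    intro d hd
    have hbA : ∀ x ∈ Subgroup.zpowers a, b * x * b ∈ Subgroup.zpowers a := by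
      rintro x ⟨k, rfl⟩
      refine ⟨-k, ?_⟩
      show a ^ (-k) = b * a ^ k * b
      calc a ^ (-k) = (a⁻¹) ^ k := by rw [zpow_neg, inv_zpow]
        _ = (b * a * b⁻¹) ^ k := by rw [hbab]
        _ = b * a ^ k * b⁻¹ := by rw [conj_zpow]
        _ = b * a ^ k * b := by rw [hb']
    have hbb : b * b = 1 := by rw [← sq]; exact hb
    induction hd using Subgroup.closure_induction with
    | mem x hx =>
      rcases hx with rfl | rfl
      · left; exact Subgroup.mem_zpowers _
      · right; rw [hbb]; exact Subgroup.one_mem _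
    | one => left; exact Subgroup.one_mem _
    | mul x y hx hy ihx ihy =>
      rcases ihx with h1 | h1 <;> rcases ihy with h2 | h2
      · left; exact Subgroup.mul_mem _ h1 h2
      · right; rw [mul_assoc]; exact Subgroup.mul_mem _ h1 h2
      · right
        have key : x * y * b = (x * b) * (b * y * b) := by
          calc x * y * b = x * 1 * y * b := by rw [mul_one]
            _ = x * (b * b) * y * b := by rw [hbb]
            _ = (x * b) * (b * y * b) := by group
        rw [key]
        exact Subgroup.mul_mem _ h1 (hbA y h2)
      · left
        have key : x * y = (x * b) * (b * (y * b) * b) := by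
          calc x * y = x * 1 * y * 1 := by rw [mul_one, mul_one]
            _ = x * (b * b) * y * (b * b) := by rw [hbb]
            _ = (x * b) * (b * (y * b) * b) := by group
        rw [key]
        exact Subgroup.mul_mem _ h1 (hbA _ h2)
    | inv x hx ihx =>
      rcases ihx with h1 | h1
      · left; exact Subgroup.inv_mem _ h1
      · right
        have key : x⁻¹ * b = b * (x * b)⁻¹ * b := by group
        rw [key]
        exact hbA _ (Subgroup.inv_mem _ h1)
  -- elements of H ⊓ D in ⟨a⟩ are trivial
  have htriv : ∀ x ∈ H ⊓ D, x ∈ Subgroup.zpowers a → x = 1 := by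
    intro x hx hxa
    have : x ∈ H ⊓ Subgroup.zpowers a := ⟨hx.1, hxa⟩
    rw [part1] at this
    exact this
  by_cases hK : ∀ x ∈ H ⊓ D, x = 1
  · left
    rw [eq_bot_iff]
    intro x hx
    exact hK x hx
  · right
    push_neg at hK
    obtain ⟨b₁, hb₁K, hb₁ne⟩ := hK
    refine ⟨b₁, hb₁K.2, ?_, ?_⟩
    · intro hmem
      exact hb₁ne (htriv b₁ hb₁K hmem)
    · refine le_antisymm ?_ ?_
      · intro x hx
        by_cases hx1 : x = 1
        · rw [hx1]; exact Subgroup.one_mem _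
        have hxb : x * b ∈ Subgroup.zpowers a := by
          rcases hform x hx.2 with h1 | h1
          · exact absurd (htriv x hx h1) hx1
          · exact h1
        have hb₁b : b₁ * b ∈ Subgroup.zpowers a := by
          rcases hform b₁ hb₁K.2 with h1 | h1
          · exact absurd (htriv b₁ hb₁K h1) hb₁ne
          · exact h1
        have hxa : x * b₁⁻¹ ∈ Subgroup.zpowers a := by
          have key : x * b₁⁻¹ = (x * b) * (b₁ * b)⁻¹ := by group
          rw [key]
          exact Subgroup.mul_mem _ hxb (Subgroup.inv_mem _ hb₁b)
        have hxH : x * b₁⁻¹ ∈ H ⊓ D :=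
          ⟨H.mul_mem hx.1 (H.inv_mem hb₁K.1), D.mul_mem hx.2 (D.inv_mem hb₁K.2)⟩
        have := htriv _ hxH hxa
        have hxeq : x = b₁ := by
          have := mul_eq_one_iff_eq_inv.mp this
          simpa using this
        rw [hxeq]
        exact Subgroup.mem_zpowers b₁
      · rw [Subgroup.zpowers_le]
        exact hb₁K
end

section
/- For m with m/2 ≥ 3 even, in A_{m+1} let a = (1 2 ⋯ m+1) and b = (1, m+1)(2, m)⋯(m/2, m/2+2). Then b ∈ A_{m+1}, b² = 1, b a b = a^{-1}, and ⟨a,b⟩ ≅ D_{2(m+1)} is a dihedral subgroup of A_{m+1} of order 2(m+1) with ⟨a,b⟩ ∩ A_m = ⟨b⟩ of order 2, and A_{m+1} = A_m · ⟨a,b⟩. -/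
/-!
`a = finRotate (m + 1)` has order `m + 1` and `b = Fin.revPerm` is an involution inverting it,
so `r ↦ a, s ↦ b` embeds `DihedralGroup (m + 1)` onto `⟨a, b⟩` as soon as `b ∉ ⟨a⟩`, which holds
because `⟨a⟩` is abelian and `a ≠ a⁻¹`. A power of `a` fixing one point is trivial, so the
stabilizer in `⟨a, b⟩` of the fixed point `m / 2` of `b` is `⟨b⟩`; and since `⟨a⟩` is transitive,
every `σ` is (an element fixing `m / 2`) times a power of `a`. For the parities,
`sign a = (-1) ^ m`, while `b` inverts all `(m + 1).choose 2` pairs.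
-/

open Equiv
open Fin.NatCast

namespace DihedralGroup

variable {G : Type*} [Group G] {n : ℕ} {r s : G}

theorem mul_pow_mul_eq_inv (hs : s ^ 2 = 1) (hsr : s * r * s = r⁻¹) (k : ℕ) :
    s * r ^ k * s = (r ^ k)⁻¹ := by
  have hs' : s⁻¹ = s := inv_eq_of_mul_eq_one_right (by rw [← sq, hs])
  calc s * r ^ k * s = (s * r * s⁻¹) ^ k := by rw [conj_pow, hs']
    _ = (r ^ k)⁻¹ := by rw [hs', hsr, inv_pow]

theorem notMem_zpowers_of_mul_mul_eq_inv (hs : s ^ 2 = 1) (hsr : s * r * s = r⁻¹)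
    (hr : 2 < orderOf r) : s ∉ Subgroup.zpowers r := by
  intro hmem
  obtain ⟨k, rfl⟩ := Subgroup.mem_zpowers_iff.mp hmem
  have hinv : r⁻¹ = r := by
    rw [← hsr, (Commute.zpow_self r k).eq, mul_assoc, ← sq, hs, mul_one]
  have hr2 : r ^ 2 = 1 := by rw [sq]; nth_rewrite 1 [← hinv]; exact inv_mul_cancel r
  exact absurd (Nat.le_of_dvd two_pos (orderOf_dvd_of_pow_eq_one hr2)) (by omega)

section Lift

variable [NeZero n]

theorem pow_val_add (hr : r ^ n = 1) (i j : ZMod n) :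
    r ^ (i + j).val = r ^ i.val * r ^ j.val := by
  rw [ZMod.val_add, ← pow_eq_pow_mod _ hr, pow_add]

theorem pow_val_sub (hr : r ^ n = 1) (i j : ZMod n) :
    r ^ (j - i).val = (r ^ i.val)⁻¹ * r ^ j.val := by
  rw [eq_inv_mul_iff_mul_eq, ← pow_val_add hr, add_sub_cancel]

def lift (hr : r ^ n = 1) (hs : s ^ 2 = 1) (hsr : s * r * s = r⁻¹) :
    DihedralGroup n →* G where
  toFun
    | .r i => r ^ i.val
    | .sr i => s * r ^ i.val
  map_one' := show r ^ (0 : ZMod n).val = 1 by simp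
  map_mul' := by
    have hconj := mul_pow_mul_eq_inv hs hsr
    rintro (i | i) (j | j)
    · exact pow_val_add hr i j
    · show s * r ^ (j - i).val = r ^ i.val * (s * r ^ j.val)
      rw [pow_val_sub hr, ← hconj]
      simp only [← mul_assoc]
      rw [← sq, hs, one_mul]
    · show s * r ^ (i + j).val = s * r ^ i.val * r ^ j.val
      rw [pow_val_add hr, mul_assoc]
    · show r ^ (j - i).val = s * r ^ i.val * (s * r ^ j.val)
      rw [pow_val_sub hr, ← hconj]
      simp only [mul_assoc]

variable (hr : r ^ n = 1) (hs : s ^ 2 = 1) (hsr : s * r * s = r⁻¹)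

@[simp]
theorem lift_r (i : ZMod n) : lift hr hs hsr (.r i) = r ^ i.val := rfl

@[simp]
theorem lift_sr (i : ZMod n) : lift hr hs hsr (.sr i) = s * r ^ i.val := rfl

theorem range_lift : (lift hr hs hsr).range = Subgroup.closure {r, s} := by
  have hr_mem : r ∈ Subgroup.closure {r, s} := Subgroup.subset_closure (by simp)
  have hs_mem : s ∈ Subgroup.closure {r, s} := Subgroup.subset_closure (by simp)
  apply le_antisymm
  · rintro x ⟨i | i, rfl⟩
    · exact pow_mem hr_mem _
    · exact mul_mem hs_mem (pow_mem hr_mem _)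
  · rw [Subgroup.closure_le]
    rintro x (rfl | rfl)
    · exact ⟨.r 1, by simp [ZMod.val_one_eq_one_mod, ← pow_eq_pow_mod 1 hr]⟩
    · exact ⟨.sr 0, by simp⟩

theorem lift_injective (hn : orderOf r = n) (hs_notMem : s ∉ Subgroup.zpowers r) :
    Function.Injective (lift hr hs hsr) := by
  rw [injective_iff_map_eq_one]
  rintro (i | i) h
  · rw [lift_r, ← orderOf_dvd_iff_pow_eq_one, hn, ← ZMod.natCast_eq_zero_iff,
      ZMod.natCast_zmod_val] at h
    rw [h, one_def]
  · rw [lift_sr, mul_eq_one_iff_eq_inv] at h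
    exact absurd (h ▸ inv_mem (pow_mem (Subgroup.mem_zpowers r) _)) hs_notMem

end Lift

noncomputable def closurePairMulEquiv [NeZero n] (hn : orderOf r = n) (hs : s ^ 2 = 1)
    (hsr : s * r * s = r⁻¹) (hs_notMem : s ∉ Subgroup.zpowers r) :
    Subgroup.closure {r, s} ≃* DihedralGroup n :=
  have hr : r ^ n = 1 := hn ▸ pow_orderOf_eq_one r
  (MulEquiv.subgroupCongr (range_lift hr hs hsr).symm).trans
    (MonoidHom.ofInjective (lift_injective hr hs hsr hn hs_notMem)).symm

end DihedralGroup

namespace Fin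

theorem sign_revPerm (n : ℕ) : Perm.sign (revPerm : Perm (Fin n)) = (-1) ^ n.choose 2 := by
  have hsum : ∑ j : Fin n, (j : ℕ) = n.choose 2 := by
    rw [Fin.sum_univ_eq_sum_range (fun j => j), Finset.sum_range_id, Nat.choose_two_right]
  have hinv : ∀ j : Fin n, ∏ i ∈ Finset.Iio j, (if revPerm i < revPerm j then 1 else -1)
      = ((-1) ^ (j : ℕ) : ℤˣ) := fun j => by
    rw [Finset.prod_congr rfl fun i hi => if_neg (by simpa using (Finset.mem_Iio.mp hi).le),
      Finset.prod_const, Fin.card_Iio]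
  rw [Perm.sign_eq_prod_prod_Iio, Finset.prod_congr rfl fun j _ => hinv j,
    Finset.prod_pow_eq_pow_sum, hsum]

theorem revPerm_sq {n : ℕ} : (revPerm : Perm (Fin n)) ^ 2 = 1 := by
  ext x; simp [sq]

theorem rev_natCast_half {m : ℕ} (hm : Even m) :
    rev ((m / 2 : ℕ) : Fin (m + 1)) = (m / 2 : ℕ) := by
  ext
  simp only [val_rev, val_natCast, Nat.mod_eq_of_lt (by omega : m / 2 < m + 1)]
  have := hm.two_dvd
  omega

theorem revPerm_mul_finRotate_mul_revPerm (n : ℕ) [NeZero n] :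
    revPerm * finRotate n * revPerm = (finRotate n)⁻¹ := by
  rw [eq_inv_iff_mul_eq_one]
  ext x
  simp [rev_add]

end Fin

section FinRotate

variable {n : ℕ} [NeZero n]

theorem finRotate_pow_apply (k : ℕ) (x : Fin n) : (finRotate n ^ k) x = x + k := by
  induction k with
  | zero => simp
  | succ k ih => rw [pow_succ', Perm.mul_apply, ih, finRotate_apply, Nat.cast_succ, add_assoc]

theorem finRotate_pow_eq_one_iff_apply_eq_self {k : ℕ} (x : Fin n) :
    finRotate n ^ k = 1 ↔ (finRotate n ^ k) x = x := by
  refine ⟨fun h => by rw [h, Perm.one_apply], fun h => ?_⟩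
  rw [finRotate_pow_apply, add_eq_left] at h
  ext y
  rw [finRotate_pow_apply, h, add_zero, Perm.one_apply]

theorem orderOf_finRotate : orderOf (finRotate n) = n := by
  have key : ∀ k, orderOf (finRotate n) ∣ k ↔ n ∣ k := fun k => by
    rw [orderOf_dvd_iff_pow_eq_one, finRotate_pow_eq_one_iff_apply_eq_self 0,
      finRotate_pow_apply, zero_add, Fin.natCast_eq_zero]
  exact Nat.dvd_antisymm ((key _).mpr dvd_rfl) ((key _).mp dvd_rfl)

theorem exists_finRotate_pow_apply_eq (x y : Fin n) : ∃ k : ℕ, (finRotate n ^ k) x = y :=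
  ⟨(y - x).val, by rw [finRotate_pow_apply, Fin.cast_val_eq_self, add_sub_cancel]⟩

theorem exists_mul_inv_finRotate_pow_mem_stabilizer (σ : Perm (Fin n)) (p : Fin n) :
    ∃ k : ℕ, σ * (finRotate n ^ k)⁻¹ ∈ MulAction.stabilizer (Perm (Fin n)) p := by
  obtain ⟨k, hk⟩ := exists_finRotate_pow_apply_eq (σ⁻¹ p) p
  refine ⟨k, show (σ * (finRotate n ^ k)⁻¹) p = p from ?_⟩
  rw [Perm.mul_apply, Perm.inv_eq_iff_eq.mpr hk.symm, Perm.coe_inv, apply_symm_apply]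

theorem closure_finRotate_revPerm_inf_stabilizer {p : Fin n} (hp : p.rev = p) :
    Subgroup.closure {finRotate n, Fin.revPerm} ⊓ MulAction.stabilizer (Perm (Fin n)) p =
      Subgroup.zpowers Fin.revPerm := by
  have hr : finRotate n ^ n = 1 := by
    simpa only [orderOf_finRotate] using pow_orderOf_eq_one (finRotate n)
  rw [← DihedralGroup.range_lift hr Fin.revPerm_sq (Fin.revPerm_mul_finRotate_mul_revPerm n)]
  apply le_antisymm
  · intro x hx
    obtain ⟨⟨i | i, rfl⟩, hx⟩ := Subgroup.mem_inf.mp hx <;>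
      rw [MulAction.mem_stabilizer_iff, Perm.smul_def] at hx
    · rw [DihedralGroup.lift_r, ← finRotate_pow_eq_one_iff_apply_eq_self] at hx
      rw [DihedralGroup.lift_r, hx]
      exact one_mem _
    · rw [DihedralGroup.lift_sr, Perm.mul_apply, Fin.revPerm_apply, Fin.rev_eq_iff, hp,
        ← finRotate_pow_eq_one_iff_apply_eq_self] at hx
      rw [DihedralGroup.lift_sr, hx, mul_one]
      exact Subgroup.mem_zpowers _
  · rw [Subgroup.zpowers_le]
    exact ⟨⟨.sr 0, by simp⟩, hp⟩

end FinRotate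

/-- In `A_{m+1}` (inside `Perm (Fin (m+1))`, `0`-indexed), with `m/2 ≥ 3` even,
let `a = (0 1 ⋯ m)` be the full rotation and `b : x ↦ m - x` the reflection
(a product of `m/2` transpositions fixing the point `m/2`).  Then `a, b` are
even, `b² = 1`, `b a b = a⁻¹`, `D = ⟨a, b⟩` is dihedral of order `2(m+1)`,
`A_m ∩ D = ⟨b⟩` where `A_m` is the point stabilizer in `A_{m+1}` of the fixed
point of `b`, and `A_{m+1} = A_m · D`. -/
theorem stmt_11 (m : ℕ) (hm : 3 ≤ m / 2) (hme : Even (m / 2)) (hm2 : Even m)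
    (a b : Equiv.Perm (Fin (m + 1)))
    (ha : a = finRotate (m + 1)) (hb : b = Fin.revPerm)
    (D Am : Subgroup (Equiv.Perm (Fin (m + 1))))
    (hD : D = Subgroup.closure {a, b})
    (hAm : Am = alternatingGroup (Fin (m + 1)) ⊓
        MulAction.stabilizer (Equiv.Perm (Fin (m + 1))) ((m / 2 : ℕ) : Fin (m + 1))) :
    a ∈ alternatingGroup (Fin (m + 1)) ∧ b ∈ alternatingGroup (Fin (m + 1)) ∧
      b ^ 2 = 1 ∧ b * a * b = a⁻¹ ∧
      Nat.card D = 2 * (m + 1) ∧ Nonempty (D ≃* DihedralGroup (m + 1)) ∧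
      Am ⊓ D = Subgroup.zpowers b ∧
      ∀ σ ∈ alternatingGroup (Fin (m + 1)), ∃ g ∈ Am, ∃ d ∈ D, σ = g * d := by
  subst ha hb hD hAm
  have haA : finRotate (m + 1) ∈ alternatingGroup (Fin (m + 1)) := by
    rw [Perm.mem_alternatingGroup, sign_finRotate, Nat.add_sub_cancel, hm2.neg_one_pow]
  have hbA : Fin.revPerm ∈ alternatingGroup (Fin (m + 1)) := by
    rw [Perm.mem_alternatingGroup, Fin.sign_revPerm]
    refine Even.neg_one_pow ?_
    rw [Nat.choose_two_right, Nat.add_sub_cancel, Nat.mul_div_assoc _ hm2.two_dvd]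
    exact hme.mul_left _
  have hbab := Fin.revPerm_mul_finRotate_mul_revPerm (m + 1)
  have hb_notMem : Fin.revPerm ∉ Subgroup.zpowers (finRotate (m + 1)) :=
    DihedralGroup.notMem_zpowers_of_mul_mul_eq_inv Fin.revPerm_sq hbab
      (by rw [orderOf_finRotate]; omega)
  let e := DihedralGroup.closurePairMulEquiv orderOf_finRotate Fin.revPerm_sq hbab hb_notMem
  refine ⟨haA, hbA, Fin.revPerm_sq, hbab,
    by rw [Nat.card_congr e.toEquiv, DihedralGroup.nat_card], ⟨e⟩, ?_, fun σ hσ => ?_⟩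
  · rw [inf_right_comm, inf_assoc,
      closure_finRotate_revPerm_inf_stabilizer (Fin.rev_natCast_half hm2),
      inf_eq_right.mpr (Subgroup.zpowers_le.mpr hbA)]
  · obtain ⟨k, hk⟩ := exists_mul_inv_finRotate_pow_mem_stabilizer σ ((m / 2 : ℕ) : Fin (m + 1))
    exact ⟨_, Subgroup.mem_inf.mpr ⟨mul_mem hσ (inv_mem (pow_mem haA k)), hk⟩,
      finRotate (m + 1) ^ k, pow_mem (Subgroup.subset_closure (by simp)) k, by group⟩
end

section
/- Let Y be a finite group, G a nonabelian simple subgroup with trivial core in Y, and suppose N is a normal subgroup of Y with N ∩ G = 1 and G ≤ C_Y(N), so that N × G ≤ Y and G is characteristic in N × G (N abelian). Then N × G is not normal in Y. -/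
/-!
Since `N` is abelian and centralizes `G`, it is central in `N ⊔ G`, so a commutator of two
elements `n₁ g₁, n₂ g₂` of `N ⊔ G` equals `⁅g₁, g₂⁆`. Hence the derived subgroup of `N ⊔ G` is
`⁅G, G⁆ = G`, the last equality because `G` is simple and nonabelian. If `N ⊔ G` were normal,
then so would be its derived subgroup `G`, which would then equal its normal core `⊥`.
-/

open scoped commutatorElement

theorem commutator_eq_top_of_isSimpleGroup {G : Type*} [Group G] [IsSimpleGroup G]
    (h : ¬ ∀ a b : G, a * b = b * a) : commutator G = ⊤ := by
  refine (IsSimpleGroup.eq_bot_or_eq_top_of_normal _ inferInstance).resolve_left fun hbot ↦ h ?_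
  intro a b
  have hab : ⁅a, b⁆ ∈ commutator G := Subgroup.commutator_mem_commutator trivial trivial
  rwa [hbot, Subgroup.mem_bot, commutatorElement_eq_one_iff_mul_comm] at hab

theorem Subgroup.commutator_self_eq_self_of_isSimpleGroup {Y : Type*} [Group Y] (G : Subgroup Y)
    [IsSimpleGroup G] (h : ¬ ∀ a b : G, a * b = b * a) : ⁅G, G⁆ = G := by
  rw [← G.map_subtype_commutator, commutator_eq_top_of_isSimpleGroup h, ← MonoidHom.range_eq_map,
    G.range_subtype]

theorem commutatorElement_mul_left_of_commute {G : Type*} [Group G] {n g h : G}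
    (hg : Commute n g) (hh : Commute n h) : ⁅n * g, h⁆ = ⁅g, h⁆ := by
  have hc : Commute n (g * h * g⁻¹) := (hg.mul_right hh).mul_right hg.inv_right
  calc ⁅n * g, h⁆ = n * (g * h * g⁻¹) * n⁻¹ * h⁻¹ := by group
    _ = ⁅g, h⁆ := by rw [hc.eq, commutatorElement_def]; group

theorem commutatorElement_mul_right_of_commute {G : Type*} [Group G] {n g h : G}
    (hg : Commute n g) (hh : Commute n h) : ⁅h, n * g⁆ = ⁅h, g⁆ := by
  rw [← commutatorElement_inv, commutatorElement_mul_left_of_commute hg hh, commutatorElement_inv]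

theorem Subgroup.commutator_sup_le_of_le_centralizer {Y : Type*} [Group Y] {N G : Subgroup Y}
    [N.Normal] (hN : N ≤ centralizer (N ⊔ G : Subgroup Y)) : ⁅N ⊔ G, N ⊔ G⁆ ≤ ⁅G, G⁆ := by
  rw [commutator_le]
  intro x hx y hy
  obtain ⟨n₁, hn₁, g₁, hg₁, rfl⟩ := mem_sup_of_normal_left.mp hx
  obtain ⟨n₂, hn₂, g₂, hg₂, rfl⟩ := mem_sup_of_normal_left.mp hy
  have central {n : Y} (hn : n ∈ N) {z : Y} (hz : z ∈ N ⊔ G) : Commute n z :=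
    ((mem_centralizer_iff.mp (hN hn)) z hz).symm
  rw [commutatorElement_mul_left_of_commute (central hn₁ (mem_sup_right hg₁)) (central hn₁ hy),
    commutatorElement_mul_right_of_commute (central hn₂ (mem_sup_right hg₂))
      (central hn₂ (mem_sup_right hg₁))]
  exact commutator_mem_commutator hg₁ hg₂

theorem stmt_16_general {Y : Type*} [Group Y] (G N : Subgroup Y)
    (hsimple : IsSimpleGroup G) (hnonab : ¬ ∀ x y : G, x * y = y * x)
    (hcore : G.normalCore = ⊥)
    (hN : N.Normal) (hNab : ∀ x ∈ N, ∀ y ∈ N, x * y = y * x)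
    (hGC : G ≤ Subgroup.centralizer (N : Set Y)) :
    ¬ (N ⊔ G).Normal := by
  intro hnormal
  have hcentral : N ≤ Subgroup.centralizer (N ⊔ G : Subgroup Y) := by
    refine Subgroup.le_centralizer_iff.mp (sup_le ?_ hGC)
    exact fun x hx ↦ Subgroup.mem_centralizer_iff.mpr fun y hy ↦ hNab y hy x hx
  have hderived : ⁅N ⊔ G, N ⊔ G⁆ = G := by
    have hGG := G.commutator_self_eq_self_of_isSimpleGroup hnonab
    refine le_antisymm ((Subgroup.commutator_sup_le_of_le_centralizer hcentral).trans hGG.le) ?_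
    exact hGG.ge.trans (Subgroup.commutator_mono le_sup_right le_sup_right)
  have hGnormal : G.Normal := hderived ▸ Subgroup.commutator_normal _ _
  have hGbot : G = ⊥ := G.normalCore_eq_self.symm.trans hcore
  exact (G.nontrivial_iff_ne_bot.mp inferInstance) hGbot

/-- Let `G` be a nonabelian simple subgroup with trivial core in the finite
group `Y`, and `N ⊴ Y` abelian with `N ∩ G = 1` and `G ≤ C_Y(N)`.  Then the
internal direct product `N × G = ⟨N, G⟩` is not normal in `Y`. -/
theorem stmt_16 {Y : Type*} [Group Y] [Finite Y] (G N : Subgroup Y)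
    (hsimple : IsSimpleGroup G) (hnonab : ¬ ∀ x y : G, x * y = y * x)
    (hcore : G.normalCore = ⊥)
    (hN : N.Normal) (hNab : ∀ x ∈ N, ∀ y ∈ N, x * y = y * x)
    (hNG : N ⊓ G = ⊥) (hGC : G ≤ Subgroup.centralizer (N : Set Y)) :
    ¬ (N ⊔ G).Normal :=
  stmt_16_general G N hsimple hnonab hcore hN hNab hGC
end
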